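/- Let L ∈ ℝ^{d×d} be symmetric positive semidefinite with Moore–Penrose pseudoinverse D, and let f : ℝ^d → ℝ be continuously differentiable. If for all z₁, z₂ ∈ ℝ^d one has 0 ≤ f(z₂) − f(z₁) − ∇f(z₁)ᵀ(z₂ − z₁) ≤ (1/2)(z₂ − z₁)ᵀL(z₂ − z₁), then for all z₁, z₂ ∈ ℝ^d: (1/2)(∇f(z₁) − ∇f(z₂))ᵀD(∇f(z₁) − ∇f(z₂)) ≤ f(z₂) − f(z₁) + ∇f(z₁)ᵀ(z₁ − z₂), and (I_d − DL)(∇f(z₁) − ∇f(z₂)) = 0. -/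

import Mathlib

/-!
Evaluating the lower bound at `z₁` and the upper bound at `z₂` at the point
`z₂ + D (∇f z₁ - ∇f z₂)` gives the inequality, because the pseudoinverse of a symmetric matrix is
symmetric and hence `Dᵀ L D = D`. Along `ker L` the two bounds coincide, so `f` is affine on each
coset of `ker L`; the lower bound at `z₁` is then an affine function of `t` on a line
`z₂ + t • u`, `u ∈ ker L`, that never becomes negative, so its slope `⟪∇f z₂ - ∇f z₁, u⟫`
vanishes. Thus `∇f z₁ - ∇f z₂ ⊥ ker L`, and `1 - D L` is the orthogonal projection onto `ker L`.
-/

open Matrix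

/-- Gradient of `f : ℝ^ι → ℝ` in coordinates. -/
noncomputable def grad {ι : Type*} [Fintype ι] [DecidableEq ι]
    (f : (ι → ℝ) → ℝ) (z : ι → ℝ) : ι → ℝ :=
  fun i => fderiv ℝ f z (Pi.single i 1)

/-- `D` is the Moore–Penrose pseudoinverse of `Q`. -/
def IsMoorePenrose {d : ℕ} (Q D : Matrix (Fin d) (Fin d) ℝ) : Prop :=
  Q * D * Q = Q ∧ D * Q * D = D ∧ (Q * D)ᵀ = Q * D ∧ (D * Q)ᵀ = D * Q

namespace IsMoorePenrose

variable {d : ℕ} {L D D' : Matrix (Fin d) (Fin d) ℝ}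

theorem transpose (hD : IsMoorePenrose L D) : IsMoorePenrose Lᵀ Dᵀ := by
  obtain ⟨h₁, h₂, h₃, h₄⟩ := hD
  refine ⟨?_, ?_, ?_, ?_⟩
  · simpa only [transpose_mul, mul_assoc] using congrArg Matrix.transpose h₁
  · simpa only [transpose_mul, mul_assoc] using congrArg Matrix.transpose h₂
  · rw [← transpose_mul, transpose_transpose, h₄]
  · rw [← transpose_mul, transpose_transpose, h₃]

theorem unique (hD : IsMoorePenrose L D) (hD' : IsMoorePenrose L D') : D = D' := by
  obtain ⟨h₁, h₂, h₃, h₄⟩ := hD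
  obtain ⟨h₁', h₂', h₃', h₄'⟩ := hD'
  have hLD : L * D = L * D' :=
    calc L * D = (L * D' * (L * D))ᵀ := by rw [← mul_assoc, h₁', h₃]
    _ = L * D' := by rw [transpose_mul, h₃, h₃', ← mul_assoc, h₁]
  have hDL : D * L = D' * L :=
    calc D * L = (D * L * (D' * L))ᵀ := by
          rw [show D * L * (D' * L) = D * (L * D' * L) by simp only [mul_assoc], h₁', h₄]
    _ = D' * L := by
          rw [transpose_mul, h₄, h₄', show D' * L * (D * L) = D' * (L * D * L) by
            simp only [mul_assoc], h₁]
  calc D = D * L * D := h₂.symm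
  _ = D' * L * D' := by rw [hDL, mul_assoc, hLD, ← mul_assoc]
  _ = D' := h₂'

theorem isSymm (hL : L.IsSymm) (hD : IsMoorePenrose L D) : D.IsSymm := by
  have hDt := hD.transpose
  rw [hL.eq] at hDt
  exact (hD.unique hDt).symm

theorem transpose_mul_mul_eq (hL : L.IsSymm) (hD : IsMoorePenrose L D) : Dᵀ * L * D = D := by
  rw [(hD.isSymm hL).eq, hD.2.1]

theorem one_sub_mul_mulVec_eq_zero (hD : IsMoorePenrose L D) {v : Fin d → ℝ}
    (hv : ∀ u, L *ᵥ u = 0 → v ⬝ᵥ u = 0) : (1 - D * L) *ᵥ v = 0 := by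
  obtain ⟨h₁, -, -, h₄⟩ := hD
  set w := (1 - D * L) *ᵥ v
  have hLw : L *ᵥ w = 0 := by
    rw [mulVec_mulVec, mul_sub, mul_one, ← mul_assoc, h₁, sub_self, zero_mulVec]
  have hw : (1 - D * L)ᵀ *ᵥ w = w := by
    rw [transpose_sub, transpose_one, h₄, sub_mulVec, one_mulVec, ← mulVec_mulVec, hLw,
      mulVec_zero, sub_zero]
  apply dotProduct_self_eq_zero.mp
  calc w ⬝ᵥ w = v ⬝ᵥ (1 - D * L)ᵀ *ᵥ w := by rw [dotProduct_mulVec v, vecMul_transpose]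
  _ = 0 := by rw [hw]; exact hv w hLw

end IsMoorePenrose

/-- Convexity and `L`-smoothness of `f`, with `g` in the role of `∇f`. -/
def BregmanSandwich {ι : Type*} [Fintype ι] (L : Matrix ι ι ℝ) (f : (ι → ℝ) → ℝ)
    (g : (ι → ℝ) → ι → ℝ) : Prop :=
  ∀ z₁ z₂ : ι → ℝ,
    0 ≤ f z₂ - f z₁ - g z₁ ⬝ᵥ (z₂ - z₁) ∧
    f z₂ - f z₁ - g z₁ ⬝ᵥ (z₂ - z₁) ≤ (1/2) * ((z₂ - z₁) ⬝ᵥ L *ᵥ (z₂ - z₁))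

namespace BregmanSandwich

variable {ι : Type*} [Fintype ι] {f : (ι → ℝ) → ℝ} {g : (ι → ℝ) → ι → ℝ} {L : Matrix ι ι ℝ}

theorem apply_add_smul_of_mulVec_eq_zero (h : BregmanSandwich L f g)
    {u : ι → ℝ} (hu : L *ᵥ u = 0) (z : ι → ℝ) (t : ℝ) :
    f (z + t • u) = f z + t * (g z ⬝ᵥ u) := by
  obtain ⟨hlow, hup⟩ := h z (z + t • u)
  simp only [add_sub_cancel_left, mulVec_smul, hu, smul_zero, dotProduct_zero, mul_zero,
    dotProduct_smul, smul_eq_mul] at hlow hup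
  linarith

theorem sub_dotProduct_eq_zero_of_mulVec_eq_zero (h : BregmanSandwich L f g)
    {u : ι → ℝ} (hu : L *ᵥ u = 0) (z₁ z₂ : ι → ℝ) :
    (g z₁ - g z₂) ⬝ᵥ u = 0 := by
  set a := (g z₁ - g z₂) ⬝ᵥ u
  set C := f z₂ - f z₁ - g z₁ ⬝ᵥ (z₂ - z₁)
  have hline : ∀ t : ℝ, 0 ≤ C - t * a := by
    intro t
    have hlow := (h z₁ (z₂ + t • u)).1
    rw [h.apply_add_smul_of_mulVec_eq_zero hu, add_sub_right_comm z₂, dotProduct_add,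
      dotProduct_smul, smul_eq_mul] at hlow
    have ha : a = g z₁ ⬝ᵥ u - g z₂ ⬝ᵥ u := sub_dotProduct _ _ _
    rw [ha]
    linarith
  by_contra ha
  have hcontra := hline ((C + 1) / a)
  rw [div_mul_cancel₀ _ ha] at hcontra
  linarith

theorem half_dotProduct_mulVec_sub_le (h : BregmanSandwich L f g)
    {D : Matrix ι ι ℝ} (hD : Dᵀ * L * D = D) (z₁ z₂ : ι → ℝ) :
    (1/2) * ((g z₁ - g z₂) ⬝ᵥ D *ᵥ (g z₁ - g z₂)) ≤ f z₂ - f z₁ + g z₁ ⬝ᵥ (z₁ - z₂) := by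
  set v := D *ᵥ (g z₁ - g z₂)
  have hlow := (h z₁ (z₂ + v)).1
  have hup := (h z₂ (z₂ + v)).2
  have hquad : v ⬝ᵥ L *ᵥ v = (g z₁ - g z₂) ⬝ᵥ v :=
    calc v ⬝ᵥ L *ᵥ v = (g z₁ - g z₂) ⬝ᵥ (Dᵀ * L * D) *ᵥ (g z₁ - g z₂) := by
          rw [← mulVec_mulVec, ← mulVec_mulVec, dotProduct_mulVec (g z₁ - g z₂),
            vecMul_transpose]
    _ = (g z₁ - g z₂) ⬝ᵥ v := by rw [hD]
  rw [add_sub_cancel_left, hquad, sub_dotProduct] at hup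
  rw [add_sub_right_comm z₂, dotProduct_add] at hlow
  rw [← neg_sub z₂, dotProduct_neg, sub_dotProduct]
  linarith

end BregmanSandwich

theorem stmt_1 {d : ℕ} (L D : Matrix (Fin d) (Fin d) ℝ) (hL : L.PosSemidef)
    (hD : IsMoorePenrose L D)
    (f : (Fin d → ℝ) → ℝ)
    (h : ∀ z₁ z₂ : Fin d → ℝ,
      0 ≤ f z₂ - f z₁ - grad f z₁ ⬝ᵥ (z₂ - z₁) ∧
      f z₂ - f z₁ - grad f z₁ ⬝ᵥ (z₂ - z₁) ≤ (1/2) * ((z₂ - z₁) ⬝ᵥ L.mulVec (z₂ - z₁))) :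
    ∀ z₁ z₂ : Fin d → ℝ,
      (1/2) * ((grad f z₁ - grad f z₂) ⬝ᵥ D.mulVec (grad f z₁ - grad f z₂))
        ≤ f z₂ - f z₁ + grad f z₁ ⬝ᵥ (z₁ - z₂) ∧
      (1 - D * L).mulVec (grad f z₁ - grad f z₂) = 0 := by
  have hLsymm : L.IsSymm := isHermitian_iff_isSymm.mp hL.isHermitian
  intro z₁ z₂
  have hf : BregmanSandwich L f (grad f) := h
  exact ⟨hf.half_dotProduct_mulVec_sub_le (hD.transpose_mul_mul_eq hLsymm) z₁ z₂,
    hD.one_sub_mul_mulVec_eq_zero fun u hu ↦ hf.sub_dotProduct_eq_zero_of_mulVec_eq_zero hu z₁ z₂⟩
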